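/- Let x ∈ ℝ^m, let {y_n} be a sequence in ℝ^m \ {x} converging to x, and let v be a unit vector. Then there exists a sequence {x_n} converging to x along the ray from x in direction v (i.e. x_n = x + t_n v with t_n > 0, t_n → 0) such that ‖y_n − x‖/‖x_n − x‖ → 0 and the unit vectors (x_n − y_n)/‖x_n − y_n‖ converge to v. -/
import Mathlib


noncomputable section
open Set Filter Topology

abbrev Euc (m : ℕ) := EuclideanSpace ℝ (Fin m)

/-- Mather's observation: given `x ∈ ℝ^m`, a sequence `y n ≠ x` converging
to `x`, and a unit vector `v`, there are points `x n = x + t n • v` on the ray from `x`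
in direction `v`, with `t n > 0`, `t n → 0`, such that `‖y n - x‖ / ‖x n - x‖ → 0` and
the unit secant vectors `(x n - y n)/‖x n - y n‖` converge to `v`. -/
theorem mather_slow_sequence (m : ℕ) (x : Euc m) (y : ℕ → Euc m) (v : Euc m)
    (hy_ne : ∀ n, y n ≠ x) (hy : Tendsto y atTop (𝓝 x)) (hv : ‖v‖ = 1) :
    ∃ t : ℕ → ℝ, (∀ n, 0 < t n) ∧ Tendsto t atTop (𝓝 0) ∧
      Tendsto (fun n => x + t n • v) atTop (𝓝 x) ∧
      Tendsto (fun n => ‖y n - x‖ / ‖(x + t n • v) - x‖) atTop (𝓝 0) ∧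
      Tendsto (fun n => ‖(x + t n • v) - y n‖⁻¹ • ((x + t n • v) - y n)) atTop (𝓝 v) := by
  have hr : ∀ n, 0 < ‖y n - x‖ := fun n => norm_pos_iff.mpr (sub_ne_zero.mpr (hy_ne n))
  set r : ℕ → ℝ := fun n => ‖y n - x‖ with hrdef
  have hr0 : Tendsto r atTop (𝓝 0) := by
    have := (tendsto_sub_nhds_zero_iff.mpr hy).norm
    simpa using this
  set t : ℕ → ℝ := fun n => Real.sqrt (r n) with htdef
  have ht_pos : ∀ n, 0 < t n := fun n => Real.sqrt_pos.mpr (hr n)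
  have ht0 : Tendsto t atTop (𝓝 0) := by
    have hs : Tendsto Real.sqrt (𝓝 0) (𝓝 0) := by
      simpa using (Real.continuous_sqrt.tendsto 0)
    exact hs.comp hr0
  have hrt : ∀ n, r n / t n = t n := fun n => Real.div_sqrt
  refine ⟨t, ht_pos, ht0, ?_, ?_, ?_⟩
  · have h1 : Tendsto (fun n => t n • v) atTop (𝓝 (0 : Euc m)) := by
      simpa using ht0.smul_const v
    simpa using tendsto_const_nhds.add h1
  · have heq : (fun n => ‖y n - x‖ / ‖(x + t n • v) - x‖) = t := by
      funext n
      rw [add_sub_cancel_left, norm_smul, hv, Real.norm_eq_abs,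
        abs_of_pos (ht_pos n), mul_one]
      exact hrt n
    rw [heq]; exact ht0
  · set w : ℕ → Euc m := fun n => v - (t n)⁻¹ • (y n - x) with hwdef
    have hw : Tendsto w atTop (𝓝 v) := by
      have h1 : Tendsto (fun n => (t n)⁻¹ • (y n - x)) atTop (𝓝 (0 : Euc m)) := by
        rw [tendsto_zero_iff_norm_tendsto_zero]
        have heq : (fun n => ‖(t n)⁻¹ • (y n - x)‖) = t := by
          funext n
          rw [norm_smul, Real.norm_eq_abs, abs_inv, abs_of_pos (ht_pos n),
            inv_mul_eq_div]
          exact hrt n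
        rw [heq]; exact ht0
      simpa using tendsto_const_nhds.sub h1
    have hkey : ∀ n, (x + t n • v) - y n = t n • w n := by
      intro n
      rw [hwdef]
      rw [smul_sub, smul_smul, mul_inv_cancel₀ (ht_pos n).ne', one_smul]
      abel
    have heq : (fun n => ‖(x + t n • v) - y n‖⁻¹ • ((x + t n • v) - y n)) =
        fun n => ‖w n‖⁻¹ • w n := by
      funext n
      rw [hkey n, norm_smul, Real.norm_eq_abs, abs_of_pos (ht_pos n), mul_inv,
        smul_smul, mul_comm ((t n)⁻¹), mul_assoc,
        inv_mul_cancel₀ (ht_pos n).ne', mul_one]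
    rw [heq]
    have hwn : Tendsto (fun n => ‖w n‖⁻¹) atTop (𝓝 1) := by
      have := (hw.norm).inv₀ (by rw [hv]; norm_num)
      simpa [hv] using this
    simpa using hwn.smul hw
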